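/- arXiv:1311.3521 — 2 statements merged into one kernel-verified Lean document; each statement's English description precedes it below -/
import Mathlib

section
/- Let P : 𝒟 → ℝ be Lipschitz with 0 ≤ ∂P/∂s ≤ R₀ and 0 ≤ ∂P/∂z a.e., and suppose the set 𝒵 = { z ∈ [0,H] : 0 ∈ Argmin Π_P(·, z) } is nonempty. Then 𝒵 is a closed interval of the form [0, z*] where z* = sup 𝒵. -/
open MeasureTheory

/-- `e(s) = r0^4/(1-2 s r0²)²`. -/
noncomputable def eFun (r0 s : ℝ) : ℝ := r0 ^ 4 / (1 - 2 * s * r0 ^ 2) ^ 2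

/-- `Π_P(ρ,z)`. -/
noncomputable def PiFun (r0 Ω : ℝ) (P : ℝ × ℝ → ℝ) (ρ z : ℝ) : ℝ :=
  ∫ s in (0 : ℝ)..ρ, (Ω ^ 2 * r0 ^ 2 / (2 * (1 - 2 * s * r0 ^ 2)) - P (s, z)) * eFun r0 s

/-- `Argmin Π_P(·,z)` over `[0, 1/(2r0²))`. -/
noncomputable def ArgminPi (r0 Ω : ℝ) (P : ℝ × ℝ → ℝ) (z : ℝ) : Set ℝ :=
  {ρ ∈ Set.Ico (0 : ℝ) (1 / (2 * r0 ^ 2)) |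
    ∀ ρ' ∈ Set.Ico (0 : ℝ) (1 / (2 * r0 ^ 2)), PiFun r0 Ω P ρ z ≤ PiFun r0 Ω P ρ' z}

/-
For `ρ` fixed, `z ↦ Π_P(ρ, z)` is antitone (since `P` is nondecreasing in `z` and `e ≥ 0`) and
Lipschitz on `[0, H]` (since `P` is). As `Π_P(0, z) = 0`, the point `0` minimizes `Π_P(·, z)` iff
`Π_P(ρ, z) ≥ 0` for every `ρ`; hence the set `𝒵` is closed and downward closed in `[0, H]`, so it
is `[0, sup 𝒵]`.
-/

open Set

theorem eq_Icc_csSup_of_isClosed {α : Type*} [ConditionallyCompleteLinearOrder α]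
    [TopologicalSpace α] [OrderTopology α] {S : Set α} {a : α} (hne : S.Nonempty)
    (hbdd : BddAbove S) (hclosed : IsClosed S) (hsub : S ⊆ Ici a)
    (hdown : ∀ z ∈ S, Icc a z ⊆ S) :
    S = Icc a (sSup S) :=
  Subset.antisymm (fun _ hz => ⟨hsub hz, le_csSup hbdd hz⟩)
    (hdown _ (hclosed.csSup_mem hne hbdd))

theorem LipschitzOnWith.continuousOn_slice {α β γ : Type*} [PseudoEMetricSpace α]
    [PseudoEMetricSpace β] [PseudoEMetricSpace γ] {f : α × β → γ} {K : NNReal} {S : Set α}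
    {T : Set β} (hf : LipschitzOnWith K f (S ×ˢ T)) {z : β} (hz : z ∈ T) :
    ContinuousOn (fun s => f (s, z)) S :=
  hf.continuousOn.comp (by fun_prop) fun _ hs => ⟨hs, hz⟩

theorem eFun_nonneg (r0 s : ℝ) : 0 ≤ eFun r0 s := by
  unfold eFun
  positivity

theorem PiFun_zero_left (r0 Ω : ℝ) (P : ℝ × ℝ → ℝ) (z : ℝ) : PiFun r0 Ω P 0 z = 0 :=
  intervalIntegral.integral_same

section

variable {r0 Ω H : ℝ} {P : ℝ × ℝ → ℝ} {K : NNReal}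

theorem zero_mem_Ico_radius (hr0 : 0 < r0) : (0 : ℝ) ∈ Ico (0 : ℝ) (1 / (2 * r0 ^ 2)) :=
  ⟨le_rfl, by positivity⟩

theorem one_sub_two_mul_pos {s : ℝ} (hr0 : 0 < r0) (hs : s < 1 / (2 * r0 ^ 2)) :
    0 < 1 - 2 * s * r0 ^ 2 := by
  have := (lt_div_iff₀ (by positivity : (0 : ℝ) < 2 * r0 ^ 2)).mp hs
  linarith

theorem zero_mem_ArgminPi_iff {z : ℝ} (hr0 : 0 < r0) :
    0 ∈ ArgminPi r0 Ω P z ↔ ∀ ρ ∈ Ico (0 : ℝ) (1 / (2 * r0 ^ 2)), 0 ≤ PiFun r0 Ω P ρ z := by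
  change _ ∧ _ ↔ _
  simp only [PiFun_zero_left, and_iff_right (zero_mem_Ico_radius hr0)]

theorem continuousOn_eFun {ρ : ℝ} (hr0 : 0 < r0) (hρ : ρ < 1 / (2 * r0 ^ 2)) :
    ContinuousOn (eFun r0) (Icc 0 ρ) :=
  continuousOn_const.div (by fun_prop) fun s hs =>
    pow_ne_zero _ (one_sub_two_mul_pos hr0 (hs.2.trans_lt hρ)).ne'

theorem intervalIntegrable_PiFun_integrand {z ρ : ℝ} (hr0 : 0 < r0)
    (hρ : ρ ∈ Ico (0 : ℝ) (1 / (2 * r0 ^ 2)))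
    (hP : ContinuousOn (fun s => P (s, z)) (Ico 0 (1 / (2 * r0 ^ 2)))) :
    IntervalIntegrable
      (fun s => (Ω ^ 2 * r0 ^ 2 / (2 * (1 - 2 * s * r0 ^ 2)) - P (s, z)) * eFun r0 s)
      volume 0 ρ := by
  have hsub : Icc 0 ρ ⊆ Ico 0 (1 / (2 * r0 ^ 2)) := Icc_subset_Ico_right hρ.2
  refine ContinuousOn.intervalIntegrable_of_Icc hρ.1
    (ContinuousOn.mul ?_ (continuousOn_eFun hr0 hρ.2))
  refine ContinuousOn.sub (continuousOn_const.div (by fun_prop) fun s hs => ?_) (hP.mono hsub)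
  exact mul_ne_zero two_ne_zero (one_sub_two_mul_pos hr0 (hsub hs).2).ne'

theorem PiFun_antitoneOn (hr0 : 0 < r0)
    (hK : LipschitzOnWith K P (Ico (0 : ℝ) (1 / (2 * r0 ^ 2)) ×ˢ Icc (0 : ℝ) H))
    (hPz : ∀ s ∈ Ico (0 : ℝ) (1 / (2 * r0 ^ 2)), MonotoneOn (fun z => P (s, z)) (Icc 0 H))
    {ρ : ℝ} (hρ : ρ ∈ Ico (0 : ℝ) (1 / (2 * r0 ^ 2))) :
    AntitoneOn (PiFun r0 Ω P ρ) (Icc 0 H) := by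
  intro z hz z' hz' hzz'
  refine intervalIntegral.integral_mono_on hρ.1
    (intervalIntegrable_PiFun_integrand hr0 hρ (hK.continuousOn_slice hz'))
    (intervalIntegrable_PiFun_integrand hr0 hρ (hK.continuousOn_slice hz))
    fun s hs => ?_
  have hPs : P (s, z) ≤ P (s, z') := hPz s ⟨hs.1, hs.2.trans_lt hρ.2⟩ hz hz' hzz'
  exact mul_le_mul_of_nonneg_right (by linarith) (eFun_nonneg r0 s)

theorem PiFun_lipschitzOnWith (hr0 : 0 < r0)
    (hK : LipschitzOnWith K P (Ico (0 : ℝ) (1 / (2 * r0 ^ 2)) ×ˢ Icc (0 : ℝ) H))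
    {ρ : ℝ} (hρ : ρ ∈ Ico (0 : ℝ) (1 / (2 * r0 ^ 2))) :
    LipschitzOnWith (Real.toNNReal (K * ∫ s in (0 : ℝ)..ρ, eFun r0 s)) (PiFun r0 Ω P ρ)
      (Icc 0 H) := by
  refine LipschitzOnWith.of_dist_le' fun z hz z' hz' => ?_
  have hsub : Icc 0 ρ ⊆ Ico 0 (1 / (2 * r0 ^ 2)) := Icc_subset_Ico_right hρ.2
  have hdiff : PiFun r0 Ω P ρ z - PiFun r0 Ω P ρ z'
      = ∫ s in (0 : ℝ)..ρ, (P (s, z') - P (s, z)) * eFun r0 s := by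
    rw [PiFun, PiFun, ← intervalIntegral.integral_sub
      (intervalIntegrable_PiFun_integrand hr0 hρ (hK.continuousOn_slice hz))
      (intervalIntegrable_PiFun_integrand hr0 hρ (hK.continuousOn_slice hz'))]
    congr 1 with s
    ring
  have hbound : ∀ s ∈ Ioc 0 ρ,
      ‖(P (s, z') - P (s, z)) * eFun r0 s‖ ≤ K * dist z z' * eFun r0 s := by
    intro s hs
    have hs' : s ∈ Ico 0 (1 / (2 * r0 ^ 2)) := hsub (Ioc_subset_Icc_self hs)
    have hP : dist (P (s, z')) (P (s, z)) ≤ K * dist (s, z') (s, z) :=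
      hK.dist_le_mul _ ⟨hs', hz'⟩ _ ⟨hs', hz⟩
    rw [Prod.dist_eq, dist_self, max_eq_right dist_nonneg, dist_comm z'] at hP
    rw [norm_mul, Real.norm_of_nonneg (eFun_nonneg r0 s)]
    exact mul_le_mul_of_nonneg_right hP (eFun_nonneg r0 s)
  have heInt : IntervalIntegrable (eFun r0) volume 0 ρ :=
    (continuousOn_eFun hr0 hρ.2).intervalIntegrable_of_Icc hρ.1
  calc dist (PiFun r0 Ω P ρ z) (PiFun r0 Ω P ρ z')
      = ‖∫ s in (0 : ℝ)..ρ, (P (s, z') - P (s, z)) * eFun r0 s‖ := by rw [dist_eq_norm, hdiff]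
    _ ≤ ∫ s in (0 : ℝ)..ρ, K * dist z z' * eFun r0 s :=
        intervalIntegral.norm_integral_le_of_norm_le hρ.1 (Filter.Eventually.of_forall hbound)
          (heInt.const_mul _)
    _ = K * (∫ s in (0 : ℝ)..ρ, eFun r0 s) * dist z z' := by
        rw [intervalIntegral.integral_const_mul]
        ring

theorem isClosed_setOf_zero_mem_ArgminPi (hr0 : 0 < r0)
    (hK : LipschitzOnWith K P (Ico (0 : ℝ) (1 / (2 * r0 ^ 2)) ×ˢ Icc (0 : ℝ) H)) :
    IsClosed {z ∈ Icc (0 : ℝ) H | (0 : ℝ) ∈ ArgminPi r0 Ω P z} := by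
  refine isClosed_of_closure_subset fun z hz => ?_
  have hsub : {z ∈ Icc (0 : ℝ) H | (0 : ℝ) ∈ ArgminPi r0 Ω P z} ⊆ Icc 0 H := fun _ h => h.1
  have hzH : z ∈ Icc 0 H := closure_minimal hsub isClosed_Icc hz
  refine ⟨hzH, (zero_mem_ArgminPi_iff hr0).mpr fun ρ hρ => ?_⟩
  exact ContinuousWithinAt.closure_le hz continuousWithinAt_const
    (((PiFun_lipschitzOnWith hr0 hK hρ).continuousOn z hzH).mono hsub)
    fun y hy => (zero_mem_ArgminPi_iff hr0).mp hy.2 ρ hρ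

theorem zero_mem_ArgminPi_of_le (hr0 : 0 < r0)
    (hK : LipschitzOnWith K P (Ico (0 : ℝ) (1 / (2 * r0 ^ 2)) ×ˢ Icc (0 : ℝ) H))
    (hPz : ∀ s ∈ Ico (0 : ℝ) (1 / (2 * r0 ^ 2)), MonotoneOn (fun z => P (s, z)) (Icc 0 H))
    {y z : ℝ} (hy : y ∈ Icc 0 H) (hz : z ∈ Icc 0 H) (hyz : y ≤ z)
    (h0 : (0 : ℝ) ∈ ArgminPi r0 Ω P z) :
    (0 : ℝ) ∈ ArgminPi r0 Ω P y :=
  (zero_mem_ArgminPi_iff hr0).mpr fun ρ hρ =>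
    ((zero_mem_ArgminPi_iff hr0).mp h0 ρ hρ).trans (PiFun_antitoneOn hr0 hK hPz hρ hy hz hyz)

end

theorem stmt9_general (r0 Ω H : ℝ) (hr0 : 0 < r0)
    (P : ℝ × ℝ → ℝ)
    (hPLip : ∃ K : NNReal, LipschitzOnWith K P
      (Set.Ico (0 : ℝ) (1 / (2 * r0 ^ 2)) ×ˢ Set.Icc (0 : ℝ) H))
    (hPz : ∀ s ∈ Set.Ico (0 : ℝ) (1 / (2 * r0 ^ 2)),
      MonotoneOn (fun z => P (s, z)) (Set.Icc (0 : ℝ) H))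
    (hne : {z ∈ Set.Icc (0 : ℝ) H | (0 : ℝ) ∈ ArgminPi r0 Ω P z}.Nonempty) :
    {z ∈ Set.Icc (0 : ℝ) H | (0 : ℝ) ∈ ArgminPi r0 Ω P z}
      = Set.Icc 0 (sSup {z ∈ Set.Icc (0 : ℝ) H | (0 : ℝ) ∈ ArgminPi r0 Ω P z}) := by
  obtain ⟨K, hK⟩ := hPLip
  refine eq_Icc_csSup_of_isClosed hne (bddAbove_Icc.mono fun _ hz => hz.1)
    (isClosed_setOf_zero_mem_ArgminPi hr0 hK) (fun _ hz => hz.1.1) fun z hz y hy => ?_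
  have hyH : y ∈ Icc 0 H := ⟨hy.1, hy.2.trans hz.1.2⟩
  exact ⟨hyH, zero_mem_ArgminPi_of_le hr0 hK hPz hyH hz.1 hy.2 hz.2⟩

/-- for `P` Lipschitz with `0 ≤ ∂P/∂s ≤ R₀` (encoded as: `P(·,z)` nondecreasing and
`R₀`-Lipschitz) and `0 ≤ ∂P/∂z` (encoded as: `P(s,·)` nondecreasing), if the set
`𝒵 = { z ∈ [0,H] : 0 ∈ Argmin Π_P(·,z) }` is nonempty then it is the closed interval
`[0, z*]` with `z* = sup 𝒵`. -/
theorem stmt9 (r0 Ω H R0 : ℝ) (hr0 : 0 < r0) (hΩ : 0 < Ω) (hH : 0 < H) (hR0 : 0 < R0)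
    (P : ℝ × ℝ → ℝ)
    (hPLip : ∃ K : NNReal, LipschitzOnWith K P
      (Set.Ico (0 : ℝ) (1 / (2 * r0 ^ 2)) ×ˢ Set.Icc (0 : ℝ) H))
    (hPs : ∀ z ∈ Set.Icc (0 : ℝ) H,
      MonotoneOn (fun s => P (s, z)) (Set.Ico (0 : ℝ) (1 / (2 * r0 ^ 2))) ∧
      LipschitzOnWith (Real.toNNReal R0) (fun s => P (s, z))
        (Set.Ico (0 : ℝ) (1 / (2 * r0 ^ 2))))
    (hPz : ∀ s ∈ Set.Ico (0 : ℝ) (1 / (2 * r0 ^ 2)),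
      MonotoneOn (fun z => P (s, z)) (Set.Icc (0 : ℝ) H))
    (hne : {z ∈ Set.Icc (0 : ℝ) H | (0 : ℝ) ∈ ArgminPi r0 Ω P z}.Nonempty) :
    {z ∈ Set.Icc (0 : ℝ) H | (0 : ℝ) ∈ ArgminPi r0 Ω P z}
      = Set.Icc 0 (sSup {z ∈ Set.Icc (0 : ℝ) H | (0 : ℝ) ∈ ArgminPi r0 Ω P z}) :=
  stmt9_general r0 Ω H hr0 P hPLip hPz hne
end

section
/- (Lipschitz continuity of the inverse free-boundary function.) Under the hypotheses of the previous statement, the function 𝔞 : [0, ρ⁻(H)] → [z*, H] defined by 𝔞(s) = inf{ z ∈ [z*, H] : ρ⁻(z) ≥ s } is Lipschitz continuous with Lipschitz constant at most c₀ (the constant from the reverse Lipschitz estimate z₂ − z₁ ≤ c₀(ρ₂ − ρ₁)). -/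
/-!
If `f` grows at least linearly with slope `1 / c` on `[a, b]`, i.e. `z₂ - z₁ ≤ c (f z₂ - f z₁)`,
then its generalized inverse `s ↦ inf {z ∈ [a, b] | s ≤ f z}` is `c`-Lipschitz: from a point `z`
of the superlevel set at height `s₁`, moving right by `c (s₂ - s₁)` raises `f` by at least
`s₂ - s₁`, so it reaches the superlevel set at height `s₂` (or leaves `[a, b]`, beyond the point
`b`, which lies in every superlevel set below `f b`). The reverse Lipschitz estimate for
minimizers supplies this growth for `ρ⁻` on `[z*, H]`.
-/

open MeasureTheory

noncomputable def generalizedInverse (f : ℝ → ℝ) (a b s : ℝ) : ℝ :=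
  sInf {z | z ∈ Set.Icc a b ∧ s ≤ f z}

section generalizedInverse

variable {f : ℝ → ℝ} {a b c s₁ s₂ : ℝ}

lemma bddBelow_superlevel (s : ℝ) : BddBelow {z | z ∈ Set.Icc a b ∧ s ≤ f z} :=
  ⟨a, fun _ hz => hz.1.1⟩

lemma generalizedInverse_le_right (hab : a ≤ b) (hs : s₁ ≤ f b) :
    generalizedInverse f a b s₁ ≤ b :=
  csInf_le (bddBelow_superlevel s₁) ⟨⟨hab, le_rfl⟩, hs⟩

lemma generalizedInverse_mono (hab : a ≤ b) (h₁₂ : s₁ ≤ s₂) (hs₂ : s₂ ≤ f b) :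
    generalizedInverse f a b s₁ ≤ generalizedInverse f a b s₂ :=
  csInf_le_csInf (bddBelow_superlevel s₁) ⟨b, ⟨hab, le_rfl⟩, hs₂⟩
    fun _ hz => ⟨hz.1, h₁₂.trans hz.2⟩

variable (hc : 0 < c)
  (hgrowth : ∀ z₁ ∈ Set.Icc a b, ∀ z₂ ∈ Set.Icc a b, z₁ ≤ z₂ → z₂ - z₁ ≤ c * (f z₂ - f z₁))
include hc hgrowth

lemma generalizedInverse_le_add_of_mem {z : ℝ} (hz : z ∈ Set.Icc a b) (hs₁ : s₁ ≤ f z)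
    (h₁₂ : s₁ ≤ s₂) (hs₂ : s₂ ≤ f b) :
    generalizedInverse f a b s₂ ≤ z + c * (s₂ - s₁) := by
  set z' := z + c * (s₂ - s₁)
  have hzz' : z ≤ z' := le_add_of_nonneg_right (mul_nonneg hc.le (sub_nonneg.2 h₁₂))
  by_cases hz'b : z' ≤ b
  · have hz' : z' ∈ Set.Icc a b := ⟨hz.1.trans hzz', hz'b⟩
    have hgain : c * (s₂ - s₁) ≤ c * (f z' - f z) := by
      simpa [z'] using hgrowth z hz z' hz' hzz'
    have hs₂' : s₂ ≤ f z' := by linarith [le_of_mul_le_mul_left hgain hc]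
    exact csInf_le (bddBelow_superlevel s₂) ⟨hz', hs₂'⟩
  · exact (generalizedInverse_le_right (hz.1.trans hz.2) hs₂).trans (not_le.1 hz'b).le

lemma generalizedInverse_le_add (hab : a ≤ b) (h₁₂ : s₁ ≤ s₂) (hs₂ : s₂ ≤ f b) :
    generalizedInverse f a b s₂ ≤ generalizedInverse f a b s₁ + c * (s₂ - s₁) := by
  have hne : {z | z ∈ Set.Icc a b ∧ s₁ ≤ f z}.Nonempty := ⟨b, ⟨hab, le_rfl⟩, h₁₂.trans hs₂⟩
  refine sub_le_iff_le_add.1 (le_csInf hne fun z hz => sub_le_iff_le_add.2 ?_)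
  exact generalizedInverse_le_add_of_mem hc hgrowth hz.1 hz.2 h₁₂ hs₂

theorem generalizedInverse_lipschitzOnWith (hab : a ≤ b) :
    LipschitzOnWith (Real.toNNReal c) (generalizedInverse f a b) (Set.Iic (f b)) := by
  refine LipschitzOnWith.of_le_add_mul' c fun x hx y hy => ?_
  rcases le_total x y with hxy | hyx
  · exact (generalizedInverse_mono hab hxy hy).trans
      (le_add_of_nonneg_right (mul_nonneg hc.le dist_nonneg))
  · rw [Real.dist_eq, abs_of_nonneg (sub_nonneg.2 hyx)]
    exact generalizedInverse_le_add hc hgrowth hab hyx hx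

end generalizedInverse

theorem stmt13_general (r0 Ω H : ℝ)
    (P : ℝ × ℝ → ℝ)
    (zs : ℝ) (hzsH : zs < H)
    (hzs : ({z ∈ Set.Icc (0 : ℝ) H | (0 : ℝ) ∈ ArgminPi r0 Ω P z}.Nonempty →
        zs = sSup {z ∈ Set.Icc (0 : ℝ) H | (0 : ℝ) ∈ ArgminPi r0 Ω P z}) ∧
      (¬{z ∈ Set.Icc (0 : ℝ) H | (0 : ℝ) ∈ ArgminPi r0 Ω P z}.Nonempty → zs = 0))
    (ρm : ℝ → ℝ)
    (hρm : ∀ z ∈ Set.Icc (0 : ℝ) H, IsLeast (ArgminPi r0 Ω P z) (ρm z))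
    (c₀ : ℝ) (hc₀ : 0 < c₀)
    (hrev : ∀ z₁ ∈ Set.Icc zs H, ∀ z₂ ∈ Set.Icc zs H, z₁ ≤ z₂ →
      ∀ ρ₁ ∈ ArgminPi r0 Ω P z₁, ∀ ρ₂ ∈ ArgminPi r0 Ω P z₂, z₂ - z₁ ≤ c₀ * (ρ₂ - ρ₁)) :
    ∀ s₁ ∈ Set.Icc (0 : ℝ) (ρm H), ∀ s₂ ∈ Set.Icc (0 : ℝ) (ρm H),
      |sInf {z | z ∈ Set.Icc zs H ∧ s₂ ≤ ρm z} - sInf {z | z ∈ Set.Icc zs H ∧ s₁ ≤ ρm z}|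
        ≤ c₀ * |s₂ - s₁| := by
  have hzs_nonneg : 0 ≤ zs := by
    by_cases hne : {z ∈ Set.Icc (0 : ℝ) H | (0 : ℝ) ∈ ArgminPi r0 Ω P z}.Nonempty
    · exact hzs.1 hne ▸ Real.sSup_nonneg fun z hz => hz.1.1
    · exact (hzs.2 hne).ge
  have hρm_mem : ∀ z ∈ Set.Icc zs H, ρm z ∈ ArgminPi r0 Ω P z := fun z hz =>
    (hρm z ⟨hzs_nonneg.trans hz.1, hz.2⟩).1
  have hlip := generalizedInverse_lipschitzOnWith hc₀
    (fun z₁ hz₁ z₂ hz₂ h => hrev z₁ hz₁ z₂ hz₂ h _ (hρm_mem z₁ hz₁) _ (hρm_mem z₂ hz₂))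
    hzsH.le
  intro s₁ hs₁ s₂ hs₂
  simpa [generalizedInverse, Real.dist_eq, hc₀.le] using hlip.dist_le_mul s₂ hs₂.2 s₁ hs₁.2

/-- Lipschitz continuity of the inverse free-boundary function: under the
hypotheses of the previous statement, if `c₀ > 0` realizes the reverse Lipschitz estimate
`z₂ − z₁ ≤ c₀(ρ₂ − ρ₁)` for minimizers, then `𝔞(s) = inf{ z ∈ [z*,H] : ρ⁻(z) ≥ s }` is
`c₀`-Lipschitz on `[0, ρ⁻(H)]`. -/
theorem stmt13 (r0 Ω H R0 : ℝ) (hr0 : 0 < r0) (hΩ : 0 < Ω) (hH : 0 < H) (hR0 : 0 < R0)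
    (P : ℝ × ℝ → ℝ)
    (hPLip : ∃ K : NNReal, LipschitzOnWith K P
      (Set.Ico (0 : ℝ) (1 / (2 * r0 ^ 2)) ×ˢ Set.Icc (0 : ℝ) H))
    (hPs : ∀ z ∈ Set.Icc (0 : ℝ) H,
      MonotoneOn (fun s => P (s, z)) (Set.Ico (0 : ℝ) (1 / (2 * r0 ^ 2))) ∧
      LipschitzOnWith (Real.toNNReal R0) (fun s => P (s, z))
        (Set.Ico (0 : ℝ) (1 / (2 * r0 ^ 2))))
    (hPz : ∀ s ∈ Set.Ico (0 : ℝ) (1 / (2 * r0 ^ 2)), ∀ z₁ ∈ Set.Icc (0 : ℝ) H,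
      ∀ z₂ ∈ Set.Icc (0 : ℝ) H, z₁ ≤ z₂ →
        (z₂ - z₁) / R0 ≤ P (s, z₂) - P (s, z₁) ∧ P (s, z₂) - P (s, z₁) ≤ R0 * (z₂ - z₁))
    (zs : ℝ) (hzsH : zs < H)
    (hzs : ({z ∈ Set.Icc (0 : ℝ) H | (0 : ℝ) ∈ ArgminPi r0 Ω P z}.Nonempty →
        zs = sSup {z ∈ Set.Icc (0 : ℝ) H | (0 : ℝ) ∈ ArgminPi r0 Ω P z}) ∧
      (¬{z ∈ Set.Icc (0 : ℝ) H | (0 : ℝ) ∈ ArgminPi r0 Ω P z}.Nonempty → zs = 0))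
    (ρm ρp : ℝ → ℝ)
    (hρm : ∀ z ∈ Set.Icc (0 : ℝ) H, IsLeast (ArgminPi r0 Ω P z) (ρm z))
    (hρp : ∀ z ∈ Set.Icc (0 : ℝ) H, IsGreatest (ArgminPi r0 Ω P z) (ρp z))
    (c₀ : ℝ) (hc₀ : 0 < c₀)
    (hrev : ∀ z₁ ∈ Set.Icc zs H, ∀ z₂ ∈ Set.Icc zs H, z₁ ≤ z₂ →
      ∀ ρ₁ ∈ ArgminPi r0 Ω P z₁, ∀ ρ₂ ∈ ArgminPi r0 Ω P z₂, z₂ - z₁ ≤ c₀ * (ρ₂ - ρ₁)) :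
    ∀ s₁ ∈ Set.Icc (0 : ℝ) (ρm H), ∀ s₂ ∈ Set.Icc (0 : ℝ) (ρm H),
      |sInf {z | z ∈ Set.Icc zs H ∧ s₂ ≤ ρm z} - sInf {z | z ∈ Set.Icc zs H ∧ s₁ ≤ ρm z}|
        ≤ c₀ * |s₂ - s₁| :=
  stmt13_general r0 Ω H P zs hzsH hzs ρm hρm c₀ hc₀ hrev
end
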